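/- Let x be k-sparse, 1 < q < ∞, and suppose ‖Aᵀw‖_∞ ≤ λσ where y = Ax + w. If x̂ solves the Dantzig selector min ‖z‖₁ s.t. ‖Aᵀ(y − Az)‖_∞ ≤ λσ, then ‖x̂ − x‖_q ≤ 4 k^{1−1/q} λσ / ρ_{q, 2^{q/(q−1)}k}(A)² and ‖x̂ − x‖₁ ≤ 8 k^{2−2/q} λσ / ρ_{q, 2^{q/(q−1)}k}(A)², provided ρ_{q, 2^{q/(q−1)}k}(A) > 0. -/

import Mathlib

open Finset Matrix

noncomputable def l1 {N : ℕ} (z : Fin N → ℝ) : ℝ := ∑ i, |z i|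
noncomputable def lq {N : ℕ} (q : ℝ) (z : Fin N → ℝ) : ℝ := (∑ i, |z i| ^ q) ^ (1/q)
noncomputable def l2 {m : ℕ} (v : Fin m → ℝ) : ℝ := Real.sqrt (∑ i, (v i)^2)
noncomputable def linf {N : ℕ} (z : Fin N → ℝ) : ℝ := ⨆ i, |z i|
open scoped Classical in
noncomputable def l0 {N : ℕ} (z : Fin N → ℝ) : ℕ := (Finset.univ.filter (fun i => z i ≠ 0)).card
noncomputable def sparsityQ {N : ℕ} (q : ℝ) (z : Fin N → ℝ) : ℝ := (l1 z / lq q z) ^ (q/(q-1))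
noncomputable def cmsv {m N : ℕ} (q s : ℝ) (A : Matrix (Fin m) (Fin N) ℝ) : ℝ :=
  sInf { r | ∃ z : Fin N → ℝ, z ≠ 0 ∧ sparsityQ q z ≤ s ∧ r = l2 (A.mulVec z) / lq q z }

/-! With `h = x̂ - x`, minimality of `x̂` against the feasible `x` puts `h` in the `ℓ₁`-cone: its
mass off the support of `x` is at most its mass on it, so Hölder on the support gives
`‖h‖₁ ≤ 2 k^{1-1/q} ‖h‖_q`, i.e. `s_q(h) ≤ 2^{q/(q-1)} k`, and hence `ρ ‖h‖_q ≤ ‖Ah‖₂`.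
Feasibility of both `x̂` and `x` puts `AᵀAh` in the `ℓ∞`-tube of radius `2λσ`, so
`‖Ah‖₂² = ⟨h, AᵀAh⟩ ≤ 2λσ ‖h‖₁ ≤ 4λσ k^{1-1/q} ‖h‖_q`. Comparing the two bounds on `‖Ah‖₂`
gives the `ℓ_q` estimate, and the cone inequality turns it into the `ℓ₁` estimate. -/

section Norms

variable {N : ℕ}

lemma abs_le_linf (z : Fin N → ℝ) (i : Fin N) : |z i| ≤ linf z :=
  le_ciSup (f := fun i => |z i|) (Set.finite_range _).bddAbove i

lemma lq_nonneg (q : ℝ) (z : Fin N → ℝ) : 0 ≤ lq q z := by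
  unfold lq; positivity

lemma lq_pos {q : ℝ} {z : Fin N → ℝ} (hz : z ≠ 0) : 0 < lq q z := by
  obtain ⟨i, hi⟩ := Function.ne_iff.mp hz
  refine Real.rpow_pos_of_pos (sum_pos' (fun j _ => by positivity) ⟨i, mem_univ i, ?_⟩) _
  exact Real.rpow_pos_of_pos (abs_pos.mpr hi) _

lemma lq_zero {q : ℝ} (hq : q ≠ 0) : lq q (0 : Fin N → ℝ) = 0 := by
  simp [lq, Real.zero_rpow hq, hq]

lemma l2_sq_eq_dotProduct {m : ℕ} (v : Fin m → ℝ) : l2 v ^ 2 = v ⬝ᵥ v := by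
  rw [l2, Real.sq_sqrt (by positivity)]
  simp only [dotProduct, sq]

lemma l2_mulVec_sq {m : ℕ} (A : Matrix (Fin m) (Fin N) ℝ) (z : Fin N → ℝ) :
    l2 (A *ᵥ z) ^ 2 = z ⬝ᵥ (Aᵀ *ᵥ (A *ᵥ z)) := by
  rw [l2_sq_eq_dotProduct, dotProduct_mulVec z, vecMul_transpose]

lemma dotProduct_le_mul_l1 {c : ℝ} (z u : Fin N → ℝ) (hu : ∀ i, |u i| ≤ c) :
    z ⬝ᵥ u ≤ c * l1 z := by
  rw [l1, mul_sum]
  refine sum_le_sum fun i _ => ?_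
  calc z i * u i ≤ |z i| * |u i| := (le_abs_self _).trans (abs_mul _ _).le
    _ ≤ c * |z i| := by rw [mul_comm c]; exact mul_le_mul_of_nonneg_left (hu i) (abs_nonneg _)

lemma sum_abs_le_card_rpow_mul_lq {q : ℝ} (hq : 1 < q) (S : Finset (Fin N)) (z : Fin N → ℝ) :
    ∑ i ∈ S, |z i| ≤ (#S : ℝ) ^ (1 - 1/q) * lq q z := by
  have hpq : (q / (q - 1)).HolderConjugate q := (Real.HolderConjugate.conjExponent hq).symm
  have hexp : 1 / (q / (q - 1)) = 1 - 1/q := by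
    have := hpq.inv_add_inv_eq_one; rw [one_div, one_div]; linarith
  have H := Real.inner_le_Lp_mul_Lq S (fun _ => 1) (fun i => |z i|) hpq
  simp only [one_mul, abs_one, Real.one_rpow, sum_const, nsmul_eq_mul, mul_one, abs_abs,
    hexp] at H
  refine H.trans (mul_le_mul_of_nonneg_left ?_ (by positivity))
  exact Real.rpow_le_rpow (by positivity)
    (sum_le_sum_of_subset_of_nonneg (subset_univ S) fun _ _ _ => by positivity) (by positivity)

end Norms

section Cone

variable {N : ℕ}

lemma sum_abs_compl_le_of_l1_add_le {S : Finset (Fin N)} {x h : Fin N → ℝ}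
    (hxS : ∀ i ∉ S, x i = 0) (hle : l1 (x + h) ≤ l1 x) :
    ∑ i ∈ Sᶜ, |h i| ≤ ∑ i ∈ S, |h i| := by
  have hsplit (z : Fin N → ℝ) : l1 z = ∑ i ∈ S, |z i| + ∑ i ∈ Sᶜ, |z i| :=
    (sum_add_sum_compl S _).symm
  have hx_compl : ∑ i ∈ Sᶜ, |x i| = 0 :=
    sum_eq_zero fun i hi => by rw [hxS i (mem_compl.mp hi), abs_zero]
  have hxh_compl : ∑ i ∈ Sᶜ, |(x + h) i| = ∑ i ∈ Sᶜ, |h i| :=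
    sum_congr rfl fun i hi => by rw [Pi.add_apply, hxS i (mem_compl.mp hi), zero_add]
  have hreverse : ∑ i ∈ S, |x i| ≤ ∑ i ∈ S, |(x + h) i| + ∑ i ∈ S, |h i| := by
    rw [← sum_add_distrib]
    refine sum_le_sum fun i _ => ?_
    simpa using abs_sub ((x + h) i) (h i)
  linarith [hsplit x, hsplit (x + h), hle]

lemma l1_le_of_l1_add_le {q : ℝ} (hq : 1 < q) {k : ℕ} {x h : Fin N → ℝ} (hx : l0 x ≤ k)
    (hle : l1 (x + h) ≤ l1 x) : l1 h ≤ 2 * (k : ℝ) ^ (1 - 1/q) * lq q h := by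
  classical
  set S := univ.filter fun i => x i ≠ 0
  have hS : (#S : ℝ) ≤ k := by
    have : #S = l0 x := by simp only [S, l0]
    exact_mod_cast this ▸ hx
  have hcompl := sum_abs_compl_le_of_l1_add_le (S := S) (by simp [S]) hle
  have hHolder := sum_abs_le_card_rpow_mul_lq hq S h
  have hk : (#S : ℝ) ^ (1 - 1/q) ≤ (k : ℝ) ^ (1 - 1/q) :=
    Real.rpow_le_rpow (by positivity) hS (by rw [sub_nonneg, div_le_one (by linarith)]; exact hq.le)
  calc l1 h = ∑ i ∈ S, |h i| + ∑ i ∈ Sᶜ, |h i| := (sum_add_sum_compl S _).symm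
    _ ≤ 2 * ((#S : ℝ) ^ (1 - 1/q) * lq q h) := by linarith
    _ ≤ 2 * (k : ℝ) ^ (1 - 1/q) * lq q h := by
      rw [mul_assoc]; gcongr; exact lq_nonneg q h

lemma sparsityQ_le_of_l1_le {q : ℝ} (hq : 1 < q) {k : ℕ} {z : Fin N → ℝ}
    (hz : l1 z ≤ 2 * (k : ℝ) ^ (1 - 1/q) * lq q z) :
    sparsityQ q z ≤ (2 : ℝ) ^ (q/(q-1)) * k := by
  have hexp : (1 - 1/q) * (q/(q-1)) = 1 := by field_simp [(by linarith : q - 1 ≠ 0)]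
  calc sparsityQ q z ≤ (2 * (k : ℝ) ^ (1 - 1/q)) ^ (q/(q-1)) := by
        refine Real.rpow_le_rpow (div_nonneg (sum_nonneg fun _ _ => abs_nonneg _) (lq_nonneg q z))
          (div_le_of_le_mul₀ (lq_nonneg q z) (by positivity) hz)
          (div_nonneg (by linarith) (by linarith))
    _ = (2 : ℝ) ^ (q/(q-1)) * k := by
        rw [Real.mul_rpow zero_le_two (by positivity), ← Real.rpow_mul k.cast_nonneg, hexp,
          Real.rpow_one]

end Cone

lemma cmsv_mul_lq_le {m N : ℕ} {q s : ℝ} (hq : q ≠ 0) (A : Matrix (Fin m) (Fin N) ℝ)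
    {z : Fin N → ℝ} (hz : sparsityQ q z ≤ s) : cmsv q s A * lq q z ≤ l2 (A *ᵥ z) := by
  rcases eq_or_ne z 0 with rfl | hz0
  · rw [lq_zero hq, mul_zero]; exact Real.sqrt_nonneg _
  have hpos := lq_pos (q := q) hz0
  rw [← le_div_iff₀ hpos]
  refine csInf_le ⟨0, ?_⟩ ⟨z, hz0, hz, rfl⟩
  rintro r ⟨v, -, -, rfl⟩
  exact div_nonneg (Real.sqrt_nonneg _) (lq_nonneg q v)

lemma lq_le_of_cone_of_tube {m N k : ℕ} {q c : ℝ} (hq : 1 < q) (hc : 0 ≤ c)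
    (A : Matrix (Fin m) (Fin N) ℝ) {h : Fin N → ℝ}
    (hρ : 0 < cmsv q ((2:ℝ) ^ (q/(q-1)) * k) A)
    (hcone : l1 h ≤ 2 * (k : ℝ) ^ (1 - 1/q) * lq q h)
    (htube : ∀ i, |(Aᵀ *ᵥ (A *ᵥ h)) i| ≤ c) :
    lq q h ≤ 2 * (k : ℝ) ^ (1 - 1/q) * c / cmsv q ((2:ℝ) ^ (q/(q-1)) * k) A ^ 2 := by
  set ρ := cmsv q ((2:ℝ) ^ (q/(q-1)) * k) A
  have hlower : ρ * lq q h ≤ l2 (A *ᵥ h) :=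
    cmsv_mul_lq_le (by linarith) A (sparsityQ_le_of_l1_le hq hcone)
  have hupper : l2 (A *ᵥ h) ^ 2 ≤ c * l1 h := by
    rw [l2_mulVec_sq]; exact dotProduct_le_mul_l1 h _ htube
  rw [le_div_iff₀ (by positivity)]
  rcases (lq_nonneg q h).eq_or_lt with h0 | hpos
  · rw [← h0, zero_mul]; positivity
  refine le_of_mul_le_mul_left ?_ hpos
  calc lq q h * (lq q h * ρ ^ 2) = (ρ * lq q h) ^ 2 := by ring
    _ ≤ l2 (A *ᵥ h) ^ 2 := pow_le_pow_left₀ (by positivity) hlower 2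
    _ ≤ c * (2 * (k : ℝ) ^ (1 - 1/q) * lq q h) := hupper.trans (by gcongr)
    _ = lq q h * (2 * (k : ℝ) ^ (1 - 1/q) * c) := by ring

theorem stmt13 {m N k : ℕ} (A : Matrix (Fin m) (Fin N) ℝ)
    (x xh : Fin N → ℝ) (w y : Fin m → ℝ) (lam : ℝ) (hlam : 0 < lam)
    (hy : y = A.mulVec x + w) (hw : linf (A.transpose.mulVec w) ≤ lam)
    (hx : l0 x ≤ k) (q : ℝ) (hq : 1 < q)
    (hfeas : linf (A.transpose.mulVec (y - A.mulVec xh)) ≤ lam)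
    (hmin : ∀ z : Fin N → ℝ,
      linf (A.transpose.mulVec (y - A.mulVec z)) ≤ lam → l1 xh ≤ l1 z)
    (hρ : 0 < cmsv q ((2:ℝ) ^ (q/(q-1)) * (k : ℝ)) A) :
    lq q (xh - x) ≤ 4 * (k : ℝ) ^ (1 - 1/q) * lam /
        (cmsv q ((2:ℝ) ^ (q/(q-1)) * (k : ℝ)) A) ^ 2 ∧
      l1 (xh - x) ≤ 8 * (k : ℝ) ^ (2 - 2/q) * lam /
        (cmsv q ((2:ℝ) ^ (q/(q-1)) * (k : ℝ)) A) ^ 2 := by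
  set ρ := cmsv q ((2:ℝ) ^ (q/(q-1)) * (k : ℝ)) A
  set h := xh - x
  have hx_feas : linf (Aᵀ *ᵥ (y - A *ᵥ x)) ≤ lam := by simpa [hy] using hw
  have hcone : l1 h ≤ 2 * (k : ℝ) ^ (1 - 1/q) * lq q h :=
    l1_le_of_l1_add_le hq hx (by simpa [h] using hmin x hx_feas)
  have htube (i : Fin N) : |(Aᵀ *ᵥ (A *ᵥ h)) i| ≤ 2 * lam := by
    have hAh : Aᵀ *ᵥ (A *ᵥ h) = Aᵀ *ᵥ w - Aᵀ *ᵥ (y - A *ᵥ xh) := by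
      rw [← mulVec_sub, hy, mulVec_sub]; congr 1; abel
    rw [hAh, Pi.sub_apply]
    linarith [abs_sub ((Aᵀ *ᵥ w) i) ((Aᵀ *ᵥ (y - A *ᵥ xh)) i), abs_le_linf (Aᵀ *ᵥ w) i,
      abs_le_linf (Aᵀ *ᵥ (y - A *ᵥ xh)) i]
  have hlq : lq q h ≤ 4 * (k : ℝ) ^ (1 - 1/q) * lam / ρ ^ 2 := by
    convert lq_le_of_cone_of_tube hq (by positivity) A hρ hcone htube using 2; ring
  refine ⟨hlq, hcone.trans ?_⟩
  have hk : (k : ℝ) ^ (2 - 2/q) = ((k : ℝ) ^ (1 - 1/q)) ^ 2 := by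
    rw [← Real.rpow_natCast, ← Real.rpow_mul k.cast_nonneg]; ring_nf
  calc 2 * (k : ℝ) ^ (1 - 1/q) * lq q h
      ≤ 2 * (k : ℝ) ^ (1 - 1/q) * (4 * (k : ℝ) ^ (1 - 1/q) * lam / ρ ^ 2) := by gcongr
    _ = 8 * (k : ℝ) ^ (2 - 2/q) * lam / ρ ^ 2 := by rw [hk]; ring
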